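/- arXiv:2101.05942 — 2 statements merged into one kernel-verified Lean document; each statement's English description precedes it below -/
import Mathlib

section
/- As |z| → ∞ with |arg z| ≤ c < π, T(z) = 1 + (i/z)·[2 ∑_{k∈Δ} Im(z_k) − ∫_{z₀}^{z₁} ν(s) ds] + O(z^{−2}). -/
/-!
Each Blaschke factor satisfies `(z - conj a) / (z - a) = 1 + (a - conj a) / z + O(z⁻²)`, and the
Cauchy integral satisfies `∫ ν(s) / (s - z) ds = -(∫ ν) / z + O(z⁻²)`, because
`ν(s) / (s - z) + ν(s) / z = ν(s) s / (z (s - z))` and `s` stays bounded. Expansions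
`1 + a u + O(u²)` multiply by adding their coefficients, and `exp (a u + O(u²)) = 1 + a u + O(u²)`
as `u → 0`; since `a - conj a = 2 i Im a`, the coefficients add up to the claimed one. All estimates
hold as `|z| → ∞` in every direction.
-/

open Complex MeasureTheory Filter Asymptotics Bornology Topology

section FirstOrder

variable {α 𝕜 : Type*} [NormedField 𝕜] {l : Filter α} {u : α → 𝕜}

theorem isBigO_mul_sub_one_sub_add_mul {f g : α → 𝕜} {a b : 𝕜}
    (hu : u =O[l] fun _ => (1 : 𝕜))
    (hf : (fun x => f x - 1 - a * u x) =O[l] fun x => u x ^ 2)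
    (hg : (fun x => g x - 1 - b * u x) =O[l] fun x => u x ^ 2) :
    (fun x => f x * g x - 1 - (a + b) * u x) =O[l] fun x => u x ^ 2 := by
  have hsq : (fun x => u x ^ 2) =O[l] fun _ => (1 : 𝕜) := by simpa using hu.pow 2
  have hg_bdd : g =O[l] fun _ => (1 : 𝕜) := by
    refine ((hg.trans hsq).add ((isBigO_const_const 1 one_ne_zero l).add
      (hu.const_mul_left b))).congr_left fun x => ?_
    ring
  have hf_bdd : (fun x => 1 + a * u x) =O[l] fun _ => (1 : 𝕜) :=
    (isBigO_const_const 1 one_ne_zero l).add (hu.const_mul_left a)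
  have hab : (fun x => a * b * u x ^ 2) =O[l] fun x => u x ^ 2 :=
    (isBigO_refl _ l).const_mul_left (a * b)
  have hfg : (fun x => (f x - 1 - a * u x) * g x) =O[l] fun x => u x ^ 2 := by
    simpa using hf.mul hg_bdd
  have hfg' : (fun x => (1 + a * u x) * (g x - 1 - b * u x)) =O[l] fun x => u x ^ 2 := by
    simpa using hf_bdd.mul hg
  exact ((hfg.add hfg').add hab).congr_left fun x => by ring

theorem isBigO_prod_sub_one_sub_sum_mul {ι : Type*} (s : Finset ι) {f : ι → α → 𝕜}
    {a : ι → 𝕜} (hu : u =O[l] fun _ => (1 : 𝕜))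
    (hf : ∀ i ∈ s, (fun x => f i x - 1 - a i * u x) =O[l] fun x => u x ^ 2) :
    (fun x => ∏ i ∈ s, f i x - 1 - (∑ i ∈ s, a i) * u x) =O[l] fun x => u x ^ 2 := by
  classical
  induction s using Finset.induction_on with
  | empty => simpa using isBigO_zero _ l
  | insert i s hi ih =>
    simp only [Finset.prod_insert hi, Finset.sum_insert hi]
    exact isBigO_mul_sub_one_sub_add_mul hu (hf i (s.mem_insert_self i))
      (ih fun j hj => hf j (Finset.mem_insert_of_mem hj))

end FirstOrder

theorem isBigO_cexp_sub_one_sub_mul {α : Type*} {l : Filter α} {u w : α → ℂ} {a : ℂ}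
    (hu : Tendsto u l (𝓝 0)) (hw : (fun x => w x - a * u x) =O[l] fun x => u x ^ 2) :
    (fun x => exp (w x) - 1 - a * u x) =O[l] fun x => u x ^ 2 := by
  have hu_sq : (fun x => u x ^ 2) =O[l] u := by
    simpa [pow_two] using (hu.isBigO_one ℂ).mul (isBigO_refl u l)
  have hw_u : w =O[l] u :=
    ((hw.trans hu_sq).add ((isBigO_refl u l).const_mul_left a)).congr_left fun x => by ring
  have hexp : (fun x => exp (w x) - 1 - w x) =O[l] fun x => w x ^ 2 := by
    refine IsBigO.of_bound 1 ?_
    filter_upwards [(hw_u.trans_tendsto hu).eventually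
      (Metric.closedBall_mem_nhds (0 : ℂ) one_pos)] with x hx
    simpa using norm_exp_sub_one_sub_id_le (by simpa using hx)
  exact ((hexp.trans (hw_u.pow 2)).add hw).congr_left fun x => by ring

theorem isBigO_sub_div_sub_sub_one_sub {𝕜 : Type*} [NormedField 𝕜] (a b : 𝕜) :
    (fun z : 𝕜 => (z - b) / (z - a) - 1 - (a - b) * z⁻¹) =O[cobounded 𝕜] fun z => z⁻¹ ^ 2 := by
  have hequiv : (fun z : 𝕜 => z - a) ~[cobounded 𝕜] id := by
    simpa [IsEquivalent, Pi.sub_def] using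
      (isLittleO_const_id_cobounded (E'' := 𝕜) (-a))
  have hinv : (fun z : 𝕜 => (z - a)⁻¹) =O[cobounded 𝕜] fun z => z⁻¹ := hequiv.inv.isBigO
  refine ((hinv.mul (isBigO_refl _ _)).const_mul_left ((a - b) * a)).congr' ?_
    (.of_eq (funext fun z => (pow_two _).symm))
  filter_upwards [eventually_ne_cobounded a, eventually_ne_cobounded 0] with z hza hz0
  have : z - a ≠ 0 := sub_ne_zero.2 hza
  field_simp
  ring

theorem isBigO_intervalIntegral_div_sub_sub {ν : ℝ → ℂ} {a b : ℝ}
    (hν : IntervalIntegrable ν volume a b) :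
    (fun z : ℂ => (∫ s in a..b, ν s / (s - z)) - (-∫ s in a..b, ν s) * z⁻¹)
      =O[cobounded ℂ] fun z => z⁻¹ ^ 2 := by
  obtain ⟨R, hR⟩ := (isCompact_uIcc (a := a) (b := b)).isBounded.exists_norm_le
  have hR0 : 0 ≤ R := (norm_nonneg a).trans (hR a Set.left_mem_uIcc)
  refine IsBigO.of_bound (|∫ s in a..b, ‖ν s‖| * (2 * R)) ?_
  filter_upwards [tendsto_norm_cobounded_atTop.eventually_gt_atTop (2 * R)] with z hz
  have hz0 : z ≠ 0 := norm_pos_iff.1 (by linarith)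
  have hdist : ∀ s ∈ Set.uIcc a b, ‖z‖ / 2 ≤ ‖(s : ℂ) - z‖ := fun s hs => by
    have := norm_sub_norm_le z (s : ℂ)
    rw [norm_sub_rev, norm_real] at this
    linarith [hR s hs]
  have hsz : ∀ s ∈ Set.uIcc a b, (s : ℂ) - z ≠ 0 := fun s hs =>
    norm_pos_iff.1 (by linarith [hdist s hs])
  have hint : IntervalIntegrable (fun s => ν s / (s - z)) volume a b := by
    simpa [div_eq_mul_inv] using hν.mul_continuousOn
      ((continuous_ofReal.sub continuous_const).continuousOn.inv₀ hsz)
  have hbound : ∀ s ∈ Set.uIcc a b,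
      ‖ν s * (s / ((s - z) * z))‖ ≤ ‖ν s‖ * (2 * R * ‖z⁻¹ ^ 2‖) := fun s hs => by
    rw [norm_mul, norm_div, norm_mul, norm_real, norm_pow, norm_inv]
    gcongr
    calc ‖s‖ / (‖(s : ℂ) - z‖ * ‖z‖) ≤ R / (‖z‖ / 2 * ‖z‖) := by
          gcongr
          exacts [hR s hs, hdist s hs]
      _ = 2 * R * ‖z‖⁻¹ ^ 2 := by field_simp
  calc ‖(∫ s in a..b, ν s / (s - z)) - (-∫ s in a..b, ν s) * z⁻¹‖
      = ‖∫ s in a..b, ν s * (s / ((s - z) * z))‖ := by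
        rw [neg_mul, sub_neg_eq_add, ← intervalIntegral.integral_mul_const,
          ← intervalIntegral.integral_add hint (hν.mul_const _)]
        congr 1
        refine intervalIntegral.integral_congr fun s hs => ?_
        have := hsz s hs
        field_simp
        ring
    _ ≤ |∫ s in a..b, ‖ν s‖ * (2 * R * ‖z⁻¹ ^ 2‖)| :=
        intervalIntegral.norm_integral_le_abs_of_norm_le
          ((ae_restrict_mem measurableSet_uIoc).mono fun s hs =>
            hbound s (Set.uIoc_subset_uIcc hs))
          (hν.norm.mul_const _)
    _ = |∫ s in a..b, ‖ν s‖| * (2 * R) * ‖z⁻¹ ^ 2‖ := by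
        rw [intervalIntegral.integral_mul_const, abs_mul,
          abs_of_nonneg (a := 2 * R * _) (by positivity)]
        ring

theorem T_asymptotic_expansion_general
    (z₀ z₁ : ℝ) (hz : z₀ < z₁) (n : ℕ) (zk : Fin n → ℂ)
    (ν : ℝ → ℝ) (hν : IntegrableOn ν (Set.Icc z₀ z₁))
    (c : ℝ) :
    (fun z : ℂ =>
        (∏ k, (z - (starRingEnd ℂ) (zk k)) / (z - zk k)) *
            Complex.exp (Complex.I *
              ∫ s in z₀..z₁, (ν s : ℂ) / ((s : ℂ) - z)) -
          1 -
          (Complex.I / z) *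
            ((2 * ∑ k, (zk k).im - ∫ s in z₀..z₁, ν s : ℝ) : ℂ))
      =O[Bornology.cobounded ℂ ⊓ Filter.principal {z : ℂ | |Complex.arg z| ≤ c}]
      (fun z : ℂ => z⁻¹ ^ 2) := by
  have hu : Tendsto (fun z : ℂ => z⁻¹) (cobounded ℂ) (𝓝 0) := tendsto_inv₀_cobounded
  have hprod := isBigO_prod_sub_one_sub_sum_mul Finset.univ (hu.isBigO_one ℂ)
    fun k _ => isBigO_sub_div_sub_sub_one_sub (zk k) (starRingEnd ℂ (zk k))
  have hcauchy := isBigO_intervalIntegral_div_sub_sub (ν := fun s => (ν s : ℂ))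
    ((intervalIntegrable_iff_integrableOn_Icc_of_le hz.le).2 hν.ofReal)
  have hexp := isBigO_cexp_sub_one_sub_mul
    (w := fun z => I * ∫ s in z₀..z₁, (ν s : ℂ) / ((s : ℂ) - z))
    (a := I * -∫ s in z₀..z₁, (ν s : ℂ)) hu
    ((hcauchy.const_mul_left I).congr_left fun z => by ring)
  refine ((isBigO_mul_sub_one_sub_add_mul (hu.isBigO_one ℂ) hprod hexp).congr_left
    fun z => ?_).mono inf_le_left
  simp only [sub_conj, intervalIntegral.integral_ofReal]
  push_cast
  rw [← Finset.sum_mul, ← Finset.mul_sum]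
  ring

theorem T_asymptotic_expansion
    (z₀ z₁ : ℝ) (hz : z₀ < z₁) (n : ℕ) (zk : Fin n → ℂ)
    (hup : ∀ k, 0 < (zk k).im)
    (ν : ℝ → ℝ) (hν : IntegrableOn ν (Set.Icc z₀ z₁))
    (c : ℝ) (hc : c < Real.pi) :
    (fun z : ℂ =>
        (∏ k, (z - (starRingEnd ℂ) (zk k)) / (z - zk k)) *
            Complex.exp (Complex.I *
              ∫ s in z₀..z₁, (ν s : ℂ) / ((s : ℂ) - z)) -
          1 -
          (Complex.I / z) *
            ((2 * ∑ k, (zk k).im - ∫ s in z₀..z₁, ν s : ℝ) : ℂ))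
      =O[Bornology.cobounded ℂ ⊓ Filter.principal {z : ℂ | |Complex.arg z| ≤ c}]
      (fun z : ℂ => z⁻¹ ^ 2) :=
  T_asymptotic_expansion_general z₀ z₁ hz n zk ν hν c
end

section
/- For conjugate exponents p, q with 2 < q < ∞ and 1/p + 1/q = 1, and for A > 0, there is a constant C such that for all t ≥ 1, ∫₀^∞ e^{−tAv²} v^{1/p − 1/2} |v − η|^{1/q − 1} dv ≤ C t^{−1/4}, uniformly in η ≥ 0. -/
/-!
Put `a = 1/p - 1/2 > 0`, `b = 1/q - 1 ∈ (-1, 0)` (so `a + b = -1/2`) and `c = tA`.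
Where `|v - η| ≥ v/2`, the factor `|v - η|^b` is at most `2^{-b} v^b`, so the integrand is
dominated by `2^{-b} v^{-1/2} e^{-cv²}`, whose integral is `2^{-b} Γ(1/4) c^{-1/4} / 2`.
Elsewhere `2η/3 < v < 2η`, so `e^{-cv²} v^a ≤ e^{-4cη²/9} (2η)^a`, and `|v - η|^b` integrates
over `(0, 2η)` to `2η^{b+1}/(b+1)`; since `a + b + 1 = 1/2` this contribution is a multiple of
`e^{-4cη²/9} η^{1/2} ≤ (4c/9)^{-1/4}`.
-/

open Real MeasureTheory Set

lemma intervalIntegrable_abs_rpow {b : ℝ} (hb : -1 < b) (x y : ℝ) :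
    IntervalIntegrable (fun x : ℝ => |x| ^ b) volume x y :=
  intervalIntegrable_of_even (by simp) fun r hr =>
    (intervalIntegral.intervalIntegrable_rpow' hb).congr fun x hx => by
      rw [uIoc_of_le hr.le] at hx
      simp [abs_of_pos hx.1]

lemma integral_abs_rpow {b : ℝ} (hb : -1 < b) {r : ℝ} (hr : 0 ≤ r) :
    ∫ x in -r..r, |x| ^ b = 2 * r ^ (b + 1) / (b + 1) := by
  have half : ∫ x in (0 : ℝ)..r, |x| ^ b = r ^ (b + 1) / (b + 1) := by
    rw [intervalIntegral.integral_congr (g := fun x => x ^ b) fun x hx => by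
      rw [uIcc_of_le hr] at hx; simp [abs_of_nonneg hx.1]]
    rw [integral_rpow (.inl hb), zero_rpow (by linarith)]
    ring
  rw [← intervalIntegral.integral_add_adjacent_intervals (b := 0)
    (intervalIntegrable_abs_rpow hb _ _) (intervalIntegrable_abs_rpow hb _ _)]
  have sym : ∫ x in -r..0, |x| ^ b = ∫ x in (0 : ℝ)..r, |x| ^ b := by
    simpa using (intervalIntegral.integral_comp_neg (a := 0) (b := r) (fun x : ℝ => |x| ^ b)).symm
  rw [sym, half]; ring

lemma intervalIntegrable_abs_sub_rpow {b : ℝ} (hb : -1 < b) (c x y : ℝ) :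
    IntervalIntegrable (fun v : ℝ => |v - c| ^ b) volume x y := by
  simpa using (intervalIntegrable_abs_rpow hb (x - c) (y - c)).comp_sub_right c

lemma integral_abs_sub_rpow {b : ℝ} (hb : -1 < b) (c : ℝ) {r : ℝ} (hr : 0 ≤ r) :
    ∫ x in (c - r)..(c + r), |x - c| ^ b = 2 * r ^ (b + 1) / (b + 1) := by
  rw [intervalIntegral.integral_comp_sub_right (fun x => |x| ^ b), sub_sub_cancel_left,
    add_sub_cancel_left, integral_abs_rpow hb hr]

lemma rpow_quarter_le_exp {u : ℝ} (hu : 0 ≤ u) : u ^ (1 / 4 : ℝ) ≤ exp u := by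
  rcases le_or_gt u 1 with h | h
  · exact (rpow_le_one hu h (by norm_num)).trans (one_le_exp hu)
  · calc u ^ (1 / 4 : ℝ) ≤ u ^ (1 : ℝ) := rpow_le_rpow_of_exponent_le h.le (by norm_num)
      _ ≤ exp u := by rw [rpow_one]; linarith [add_one_le_exp u]

lemma exp_neg_mul_sq_mul_rpow_half_le {c x : ℝ} (hc : 0 < c) (hx : 0 ≤ x) :
    exp (-(c * x ^ 2)) * x ^ (1 / 2 : ℝ) ≤ c ^ (-(1 / 4) : ℝ) := by
  have hroot : (c * x ^ 2) ^ (1 / 4 : ℝ) = c ^ (1 / 4 : ℝ) * x ^ (1 / 2 : ℝ) := by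
    rw [mul_rpow hc.le (by positivity), ← rpow_natCast x 2, ← rpow_mul hx]
    norm_num
  have key : c ^ (1 / 4 : ℝ) * x ^ (1 / 2 : ℝ) ≤ exp (c * x ^ 2) :=
    hroot ▸ rpow_quarter_le_exp (by positivity)
  rw [rpow_neg hc.le, exp_neg, inv_mul_le_iff₀ (exp_pos _), ← div_eq_mul_inv,
    le_div_iff₀ (by positivity), mul_comm]
  exact key

lemma integral_rpow_neg_half_mul_exp_neg_mul_sq {c : ℝ} (hc : 0 < c) :
    ∫ v in Ioi (0 : ℝ), v ^ (-(1 / 2) : ℝ) * exp (-c * v ^ 2) =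
      c ^ (-(1 / 4) : ℝ) * (Gamma (1 / 4) / 2) := by
  have := integral_rpow_mul_exp_neg_mul_rpow two_pos (by norm_num : (-1 : ℝ) < -(1 / 2)) hc
  norm_num [rpow_two] at this ⊢
  rw [this]; ring

lemma exp_neg_mul_sq_mul_rpow_mul_abs_sub_rpow_le_of_half_le {a b c η v : ℝ} (hb : b ≤ 0)
    (hab : a + b = -(1 / 2)) (hv : 0 < v) (h : v / 2 ≤ |v - η|) :
    exp (-c * v ^ 2) * v ^ a * |v - η| ^ b ≤
      2 ^ (-b) * (v ^ (-(1 / 2) : ℝ) * exp (-c * v ^ 2)) := by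
  have half_pow : (v / 2) ^ b = 2 ^ (-b) * v ^ b := by
    rw [div_rpow hv.le zero_le_two, rpow_neg zero_le_two, div_eq_inv_mul]
  calc exp (-c * v ^ 2) * v ^ a * |v - η| ^ b ≤ exp (-c * v ^ 2) * v ^ a * (v / 2) ^ b := by
        gcongr exp (-c * v ^ 2) * v ^ a * ?_
        exact rpow_le_rpow_of_nonpos (by positivity) h hb
    _ = 2 ^ (-b) * (v ^ (a + b) * exp (-c * v ^ 2)) := by
        rw [half_pow, rpow_add hv]; ring
    _ = _ := by rw [hab]

lemma exp_neg_mul_sq_mul_rpow_le_of_abs_sub_lt_half {a c η v : ℝ} (ha : 0 ≤ a) (hc : 0 ≤ c)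
    (hv : 0 < v) (h : |v - η| < v / 2) :
    exp (-c * v ^ 2) * v ^ a ≤ exp (-(4 / 9 * c * η ^ 2)) * (2 * η) ^ a := by
  obtain ⟨hlow, hhigh⟩ := abs_lt.mp h
  have hsq : 4 / 9 * η ^ 2 ≤ v ^ 2 := by nlinarith
  gcongr
  · nlinarith
  · linarith

/-- The contribution of the region `|v - η| < v / 2`, which lies in `(0, 2η)`. -/
lemma exp_neg_mul_sq_mul_rpow_mul_near_integral_le {a b c η : ℝ} (hb : -1 < b)
    (hab : a + b = -(1 / 2)) (hc : 0 < c) (hη : 0 ≤ η) :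
    exp (-(4 / 9 * c * η ^ 2)) * (2 * η) ^ a * (2 * η ^ (b + 1) / (b + 1)) ≤
      2 ^ (a + 1) / (b + 1) * (4 / 9) ^ (-(1 / 4) : ℝ) * c ^ (-(1 / 4) : ℝ) := by
  have hb1 : 0 < b + 1 := by linarith
  have hη_half : η ^ a * η ^ (b + 1) = η ^ (1 / 2 : ℝ) := by
    rw [← rpow_add' hη (by linarith)]
    congr 1
    linarith
  have hη_pow : (2 * η) ^ a * (2 * η ^ (b + 1)) = 2 ^ (a + 1) * η ^ (1 / 2 : ℝ) := by
    rw [mul_rpow zero_le_two hη, rpow_add two_pos, rpow_one, ← hη_half]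
    ring
  calc exp (-(4 / 9 * c * η ^ 2)) * (2 * η) ^ a * (2 * η ^ (b + 1) / (b + 1))
      = 2 ^ (a + 1) / (b + 1) * (exp (-(4 / 9 * c * η ^ 2)) * η ^ (1 / 2 : ℝ)) := by
        rw [mul_div_assoc', mul_assoc, hη_pow]; ring
    _ ≤ 2 ^ (a + 1) / (b + 1) * (4 / 9 * c) ^ (-(1 / 4) : ℝ) := by
        gcongr
        exact exp_neg_mul_sq_mul_rpow_half_le (by positivity) hη
    _ = _ := by rw [mul_rpow (by norm_num) hc.le]; ring

theorem integral_exp_neg_mul_sq_mul_rpow_mul_abs_sub_rpow_le {a b c η : ℝ} (ha : 0 ≤ a)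
    (hb : -1 < b) (hb0 : b ≤ 0) (hab : a + b = -(1 / 2)) (hc : 0 < c) (hη : 0 ≤ η) :
    ∫ v in Ioi (0 : ℝ), exp (-c * v ^ 2) * v ^ a * |v - η| ^ b ≤
      (2 ^ (-b) * (Gamma (1 / 4) / 2) + 2 ^ (a + 1) / (b + 1) * (4 / 9) ^ (-(1 / 4) : ℝ)) *
        c ^ (-(1 / 4) : ℝ) := by
  set K := exp (-(4 / 9 * c * η ^ 2)) * (2 * η) ^ a
  set far := fun v : ℝ => 2 ^ (-b) * (v ^ (-(1 / 2) : ℝ) * exp (-c * v ^ 2))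
  set near := (Ioc 0 (2 * η)).indicator fun v => K * |v - η| ^ b
  have far_integrable : IntegrableOn far (Ioi 0) :=
    (integrableOn_rpow_mul_exp_neg_mul_sq hc (by norm_num)).const_mul _
  have near_integral : ∫ v in Ioi 0, near v = K * (2 * η ^ (b + 1) / (b + 1)) := by
    rw [integral_indicator measurableSet_Ioc, Measure.restrict_restrict measurableSet_Ioc,
      inter_eq_left.mpr Ioc_subset_Ioi_self, ← intervalIntegral.integral_of_le (by linarith),
      intervalIntegral.integral_const_mul, show (0 : ℝ) = η - η by ring,
      show 2 * η = η + η by ring, integral_abs_sub_rpow hb η hη]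
  have near_integrable : IntegrableOn near (Ioi 0) := by
    refine Integrable.integrableOn ((integrable_indicator_iff measurableSet_Ioc).mpr ?_)
    refine (intervalIntegrable_iff_integrableOn_Ioc_of_le (by linarith)).mp ?_
    exact (intervalIntegrable_abs_sub_rpow hb η 0 (2 * η)).const_mul K
  have majorant :
      ∀ v ∈ Ioi (0 : ℝ), exp (-c * v ^ 2) * v ^ a * |v - η| ^ b ≤ far v + near v := by
    intro v (hv : 0 < v)
    have far_nonneg : 0 ≤ far v := by positivity
    have near_nonneg : 0 ≤ near v := indicator_nonneg (fun _ _ => by positivity) v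
    rcases le_or_gt (v / 2) |v - η| with h | h
    · linarith [exp_neg_mul_sq_mul_rpow_mul_abs_sub_rpow_le_of_half_le (c := c) hb0 hab hv h]
    · have hv2 : v ∈ Ioc 0 (2 * η) := ⟨hv, by linarith [(abs_lt.mp h).2]⟩
      have near_bound := mul_le_mul_of_nonneg_right
        (exp_neg_mul_sq_mul_rpow_le_of_abs_sub_lt_half ha hc.le hv h)
        (rpow_nonneg (abs_nonneg (v - η)) b)
      simp only [near, indicator_of_mem hv2]
      linarith
  calc ∫ v in Ioi (0 : ℝ), exp (-c * v ^ 2) * v ^ a * |v - η| ^ b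
      ≤ ∫ v in Ioi 0, far v + near v := by
        refine integral_mono_of_nonneg ?_ (far_integrable.add near_integrable) ?_
        · filter_upwards [ae_restrict_mem measurableSet_Ioi] with v (hv : 0 < v)
          positivity
        · filter_upwards [ae_restrict_mem measurableSet_Ioi] using majorant
    _ = 2 ^ (-b) * (c ^ (-(1 / 4) : ℝ) * (Gamma (1 / 4) / 2)) +
          K * (2 * η ^ (b + 1) / (b + 1)) := by
        rw [integral_add far_integrable near_integrable, near_integral, integral_const_mul,
          integral_rpow_neg_half_mul_exp_neg_mul_sq hc]
    _ ≤ _ := by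
        linarith [exp_neg_mul_sq_mul_rpow_mul_near_integral_le hb hab hc hη]

theorem integral_estimate_Holder_pair
    (p q A : ℝ) (hq : 2 < q) (hpq : 1 / p + 1 / q = 1) (hA : 0 < A) :
    ∃ C : ℝ, ∀ t η : ℝ, 1 ≤ t → 0 ≤ η →
      (∫ v in Set.Ioi (0 : ℝ),
          Real.exp (-t * A * v ^ 2) * v ^ (1 / p - 1 / 2) *
            |v - η| ^ (1 / q - 1)) ≤
        C * t ^ (-(1 / 4) : ℝ) := by
  set a := 1 / p - 1 / 2 with ha
  set b := 1 / q - 1 with hb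
  have hq_inv : 0 < 1 / q ∧ 1 / q < 1 / 2 :=
    ⟨by positivity, by rw [div_lt_div_iff₀ (by linarith) two_pos]; linarith⟩
  refine ⟨(2 ^ (-b) * (Gamma (1 / 4) / 2) + 2 ^ (a + 1) / (b + 1) * (4 / 9) ^ (-(1 / 4) : ℝ)) *
    A ^ (-(1 / 4) : ℝ), fun t η ht hη => ?_⟩
  have ht0 : 0 < t := by linarith
  have bound := integral_exp_neg_mul_sq_mul_rpow_mul_abs_sub_rpow_le (a := a) (b := b)
    (c := t * A) (by linarith) (by linarith) (by linarith) (by linarith) (by positivity) hη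
  rw [mul_rpow ht0.le hA.le] at bound
  simp only [neg_mul] at bound ⊢
  convert bound using 1
  ring
end
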